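/- The affine restriction on vertex-structure typing can be relaxed: if Ω; ∅ ⊢ V : τ (V is typed using only the affine context Ω), then ∅; Ω ⊢ V : τ (V is typed using Ω as an unrestricted context). -/

import Mathlib

/-- Availability annotations -/
inductive Avail : Type
  | avail : Avail
  | unavail : Avail
deriving DecidableEq

/-- Vertex structure (VS) types: single vertex, annotated products,
    type variables, corecursive types. -/
inductive VSTy : Type
  | vert : VSTy
  | prod : VSTy → Avail → VSTy → Avail → VSTy
  | tvar : ℕ → VSTy
  | corec : ℕ → VSTy → VSTy
deriving DecidableEq

/-- Substitution of a VS type for a type variable (capture-avoiding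
    in the sense of not descending under a binder that rebinds `t`). -/
def VSTy.subst (t : ℕ) (σ : VSTy) : VSTy → VSTy
  | .vert => .vert
  | .prod τ₁ a₁ τ₂ a₂ => .prod (VSTy.subst t σ τ₁) a₁ (VSTy.subst t σ τ₂) a₂
  | .tvar s => if s = t then σ else .tvar s
  | .corec s τ => if s = t then .corec s τ else .corec s (VSTy.subst t σ τ)

/-- VS subtyping. -/
inductive SubTy : VSTy → VSTy → Prop
  | refl (τ : VSTy) : SubTy τ τ
  | trans {τ τ'' τ' : VSTy} : SubTy τ τ'' → SubTy τ'' τ' → SubTy τ τ'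
  | prodLeft (τ₁ : VSTy) (a₁ : Avail) (τ₂ : VSTy) (a₂ : Avail) (τ₃ : VSTy) :
      SubTy (.prod τ₁ a₁ τ₂ a₂) (.prod τ₃ .unavail τ₂ a₂)
  | prodRight (τ₁ : VSTy) (a₁ : Avail) (τ₂ : VSTy) (a₂ : Avail) (τ₃ : VSTy) :
      SubTy (.prod τ₁ a₁ τ₂ a₂) (.prod τ₁ a₁ τ₃ .unavail)
  | prodCong {τ₁ τ₁' τ₂ τ₂' : VSTy} (a₁ a₂ : Avail) :
      SubTy τ₁ τ₁' → SubTy τ₂ τ₂' → SubTy (.prod τ₁ a₁ τ₂ a₂) (.prod τ₁' a₁ τ₂' a₂)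
  | corec1 (t : ℕ) (τ : VSTy) : SubTy (.corec t τ) (VSTy.subst t (.corec t τ) τ)
  | corec2 (t : ℕ) (τ : VSTy) : SubTy (VSTy.subst t (.corec t τ) τ) (.corec t τ)

/-- VS type splitting  τ ⇝ τ₁ ⋈ τ₂. -/
inductive VSplit : VSTy → VSTy → VSTy → Prop
  | prod (τ₁ τ₂ : VSTy) :
      VSplit (.prod τ₁ .avail τ₂ .avail)
            (.prod τ₁ .avail τ₂ .unavail)
            (.prod τ₁ .unavail τ₂ .avail)
  | both {τ₁ τ₁' τ₁'' τ₂ τ₂' τ₂'' : VSTy} :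
      VSplit τ₁ τ₁' τ₁'' → VSplit τ₂ τ₂' τ₂'' →
      VSplit (.prod τ₁ .avail τ₂ .avail)
            (.prod τ₁' .avail τ₂' .avail)
            (.prod τ₁'' .avail τ₂'' .avail)
  | left {τ₁ τ₁' τ₁'' : VSTy} (τ₂ : VSTy) (a : Avail) :
      VSplit τ₁ τ₁' τ₁'' →
      VSplit (.prod τ₁ .avail τ₂ a)
            (.prod τ₁' .avail τ₂ a)
            (.prod τ₁'' .avail τ₂ .unavail)
  | right {τ₂ τ₂' τ₂'' : VSTy} (τ₁ : VSTy) (a : Avail) :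
      VSplit τ₂ τ₂' τ₂'' →
      VSplit (.prod τ₁ a τ₂ .avail)
            (.prod τ₁ a τ₂' .avail)
            (.prod τ₁ .unavail τ₂'' .avail)
  | corec {t : ℕ} {τ τ₁ τ₂ : VSTy} :
      VSplit (VSTy.subst t (.corec t τ) τ) τ₁ τ₂ → VSplit (.corec t τ) τ₁ τ₂
  | sub {τ τ₁ τ₁' τ₂ : VSTy} :
      VSplit τ τ₁' τ₂ → SubTy τ₁' τ₁ → VSplit τ τ₁ τ₂
  | comm {τ τ₁ τ₂ : VSTy} : VSplit τ τ₂ τ₁ → VSplit τ τ₁ τ₂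

/-- Names bound in contexts: VS variables or generators. -/
inductive VName : Type
  | var : ℕ → VName
  | gen : ℕ → VName
deriving DecidableEq

/-- A context binds names to VS types. -/
abbrev Ctx := List (VName × VSTy)

/-- Affine context splitting  Ω ⇝ Ω₁ ⋈ Ω₂. -/
inductive CtxSplit : Ctx → Ctx → Ctx → Prop
  | empty : CtxSplit [] [] []
  | comm {Ω Ω₁ Ω₂ : Ctx} : CtxSplit Ω Ω₂ Ω₁ → CtxSplit Ω Ω₁ Ω₂
  | bind {Ω Ω₁ Ω₂ : Ctx} (x : VName) (τ : VSTy) :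
      CtxSplit Ω Ω₁ Ω₂ → CtxSplit ((x, τ) :: Ω) ((x, τ) :: Ω₁) Ω₂
  | typeSplit {Ω Ω₁ Ω₂ : Ctx} {τ τ₁ τ₂ : VSTy} (x : VName) :
      CtxSplit Ω Ω₁ Ω₂ → VSplit τ τ₁ τ₂ →
      CtxSplit ((x, τ) :: Ω) ((x, τ₁) :: Ω₁) ((x, τ₂) :: Ω₂)

/-- Vertex structures. -/
inductive VS : Type
  | var : ℕ → VS
  | gen : ℕ → VS
  | pair : VS → VS → VS
  | fst : VS → VS
  | snd : VS → VS
deriving DecidableEq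

/-- Typing of vertex structures:  Ω; Ψ ⊢ V : τ, with affine context Ω
    and unrestricted context Ψ. -/
inductive HasTy : Ctx → Ctx → VS → VSTy → Prop
  | omegaVar {Ω Ψ : Ctx} {u : ℕ} {τ : VSTy} :
      (VName.var u, τ) ∈ Ω → HasTy Ω Ψ (.var u) τ
  | psiVar {Ω Ψ : Ctx} {u : ℕ} {τ : VSTy} :
      (VName.var u, τ) ∈ Ψ → HasTy Ω Ψ (.var u) τ
  | omegaGen {Ω Ψ : Ctx} {g : ℕ} {τ : VSTy} :
      (VName.gen g, τ) ∈ Ω → HasTy Ω Ψ (.gen g) τ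
  | psiGen {Ω Ψ : Ctx} {g : ℕ} {τ : VSTy} :
      (VName.gen g, τ) ∈ Ψ → HasTy Ω Ψ (.gen g) τ
  | pair {Ω Ω₁ Ω₂ Ψ : Ctx} {V₁ V₂ : VS} {τ₁ τ₂ : VSTy} :
      CtxSplit Ω Ω₁ Ω₂ → HasTy Ω₁ Ψ V₁ τ₁ → HasTy Ω₂ Ψ V₂ τ₂ →
      HasTy Ω Ψ (.pair V₁ V₂) (.prod τ₁ .avail τ₂ .avail)
  | onlyLeftPair {Ω Ψ Ψ' : Ctx} {V₁ V₂ : VS} {τ₁ τ₂ : VSTy} :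
      HasTy Ω Ψ V₁ τ₁ → HasTy [] Ψ' V₂ τ₂ →
      HasTy Ω Ψ (.pair V₁ V₂) (.prod τ₁ .avail τ₂ .unavail)
  | onlyRightPair {Ω Ψ Ψ' : Ctx} {V₁ V₂ : VS} {τ₁ τ₂ : VSTy} :
      HasTy [] Ψ' V₁ τ₁ → HasTy Ω Ψ V₂ τ₂ →
      HasTy Ω Ψ (.pair V₁ V₂) (.prod τ₁ .unavail τ₂ .avail)
  | fst {Ω Ψ : Ctx} {V : VS} {τ₁ τ₂ : VSTy} {a : Avail} :
      HasTy Ω Ψ V (.prod τ₁ .avail τ₂ a) → HasTy Ω Ψ (.fst V) τ₁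
  | snd {Ω Ψ : Ctx} {V : VS} {τ₁ τ₂ : VSTy} {a : Avail} :
      HasTy Ω Ψ V (.prod τ₁ a τ₂ .avail) → HasTy Ω Ψ (.snd V) τ₂
  | sub {Ω Ψ : Ctx} {V : VS} {τ' τ : VSTy} :
      HasTy Ω Ψ V τ' → SubTy τ' τ → HasTy Ω Ψ V τ

/-- Big-step normalization of vertex structures  V ↓ V'. -/
inductive VNorm : VS → VS → Prop
  | var (u : ℕ) : VNorm (.var u) (.var u)
  | gen (g : ℕ) : VNorm (.gen g) (.gen g)
  | pair {V₁ V₁' V₂ V₂' : VS} :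
      VNorm V₁ V₁' → VNorm V₂ V₂' → VNorm (.pair V₁ V₂) (.pair V₁' V₂')
  | fstPair {V V₁ V₂ : VS} : VNorm V (.pair V₁ V₂) → VNorm (.fst V) V₁
  | fstNotPair {V V' : VS} :
      VNorm V V' → (∀ V₁ V₂, V' ≠ .pair V₁ V₂) → VNorm (.fst V) (.fst V')
  | sndPair {V V₁ V₂ : VS} : VNorm V (.pair V₁ V₂) → VNorm (.snd V) V₂
  | sndNotPair {V V' : VS} :
      VNorm V V' → (∀ V₁ V₂, V' ≠ .pair V₁ V₂) → VNorm (.snd V) (.snd V')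

/-- Vertex structure equivalence  Ψ ⊢ V ≡ V' : τ. -/
inductive VSEquiv : Ctx → VS → VS → VSTy → Prop
  | refl {Ψ : Ctx} {V : VS} {τ : VSTy} :
      HasTy [] Ψ V τ → VSEquiv Ψ V V τ
  | comm {Ψ : Ctx} {V V' : VS} {τ : VSTy} :
      VSEquiv Ψ V' V τ → VSEquiv Ψ V V' τ
  | trans {Ψ : Ctx} {V V'' V' : VS} {τ : VSTy} :
      VSEquiv Ψ V V'' τ → VSEquiv Ψ V'' V' τ → VSEquiv Ψ V V' τ
  | pair {Ψ : Ctx} {V₁ V₁' V₂ V₂' : VS} {τ₁ τ₂ : VSTy} :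
      VSEquiv Ψ V₁ V₁' τ₁ → VSEquiv Ψ V₂ V₂' τ₂ →
      VSEquiv Ψ (.pair V₁ V₂) (.pair V₁' V₂') (.prod τ₁ .avail τ₂ .avail)
  | onlyLeftPair {Ψ Ψ' : Ctx} {V₁ V₁' V₂ V₂' : VS} {τ₁ τ₂ : VSTy} :
      VSEquiv Ψ V₁ V₁' τ₁ → VSEquiv Ψ' V₂ V₂' τ₂ →
      VSEquiv Ψ (.pair V₁ V₂) (.pair V₁' V₂') (.prod τ₁ .avail τ₂ .unavail)
  | onlyRightPair {Ψ Ψ' : Ctx} {V₁ V₁' V₂ V₂' : VS} {τ₁ τ₂ : VSTy} :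
      VSEquiv Ψ' V₁ V₁' τ₁ → VSEquiv Ψ V₂ V₂' τ₂ →
      VSEquiv Ψ (.pair V₁ V₂) (.pair V₁' V₂') (.prod τ₁ .unavail τ₂ .avail)
  | fst {Ψ : Ctx} {V V' : VS} {τ₁ τ₂ : VSTy} {a : Avail} :
      VSEquiv Ψ V V' (.prod τ₁ .avail τ₂ a) → VSEquiv Ψ (.fst V) (.fst V') τ₁
  | snd {Ψ : Ctx} {V V' : VS} {τ₁ τ₂ : VSTy} {a : Avail} :
      VSEquiv Ψ V V' (.prod τ₁ a τ₂ .avail) → VSEquiv Ψ (.snd V) (.snd V') τ₂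
  | fstPair {Ψ : Ctx} {V V₁ V₂ : VS} {τ₁ τ₂ : VSTy} {a : Avail} :
      VSEquiv Ψ V (.pair V₁ V₂) (.prod τ₁ .avail τ₂ a) →
      VSEquiv Ψ (.fst V) V₁ τ₁
  | sndPair {Ψ : Ctx} {V V₁ V₂ : VS} {τ₁ τ₂ : VSTy} {a : Avail} :
      VSEquiv Ψ V (.pair V₁ V₂) (.prod τ₁ a τ₂ .avail) →
      VSEquiv Ψ (.snd V) V₂ τ₂
  | sub {Ψ : Ctx} {V V' : VS} {τ' τ : VSTy} :
      VSEquiv Ψ V V' τ' → SubTy τ' τ → VSEquiv Ψ V V' τ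

/-- VNeutral vertex structures: variables, generators, and their projections. -/
inductive VNeutral : VS → Prop
  | var (u : ℕ) : VNeutral (.var u)
  | gen (g : ℕ) : VNeutral (.gen g)
  | fst {V : VS} : VNeutral V → VNeutral (.fst V)
  | snd {V : VS} : VNeutral V → VNeutral (.snd V)

/-- VNormal vertex structures: neutral structures and pairs of normal structures. -/
inductive VNormal : VS → Prop
  | neutral {V : VS} : VNeutral V → VNormal V
  | pair {V₁ V₂ : VS} : VNormal V₁ → VNormal V₂ → VNormal (.pair V₁ V₂)

/-- Vertex paths: a generator followed by a sequence of projections. -/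
inductive IsPath : VS → Prop
  | gen (g : ℕ) : IsPath (.gen g)
  | fst {p : VS} : IsPath p → IsPath (.fst p)
  | snd {p : VS} : IsPath p → IsPath (.snd p)

/-- A context containing only generator bindings. -/
def GenOnly (Ω : Ctx) : Prop := ∀ e ∈ Ω, ∃ g τ, e = (VName.gen g, τ)

/-- Substitution of a vertex structure for a VS variable. -/
def VS.subst (u : ℕ) (W : VS) : VS → VS
  | .var v => if v = u then W else .var v
  | .gen g => .gen g
  | .pair V₁ V₂ => .pair (VS.subst u W V₁) (VS.subst u W V₂)
  | .fst V => .fst (VS.subst u W V)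
  | .snd V => .snd (VS.subst u W V)

/-! Moving `Ω` to the unrestricted context turns affine lookups into unrestricted ones, so the
only rule that needs care is the pair rule, which splits `Ω`. A split only ever replaces a binding
`x : σ` by some `x : σ'` with `σ ≤ σ'`; once `Ω` is unrestricted, each component of the pair can
look up the original binding `x : σ` and reach `σ'` by subsumption. -/

def SubCtx (Θ Ω : Ctx) : Prop :=
  ∀ x σ, (x, σ) ∈ Ω → ∃ σ', (x, σ') ∈ Θ ∧ SubTy σ' σ

namespace SubCtx

theorem refl (Ω : Ctx) : SubCtx Ω Ω :=
  fun _ σ hm => ⟨σ, hm, SubTy.refl σ⟩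

theorem nil (Θ : Ctx) : SubCtx Θ [] :=
  fun _ _ hm => absurd hm List.not_mem_nil

theorem trans {Θ Ω' Ω : Ctx} (h₁ : SubCtx Θ Ω') (h₂ : SubCtx Ω' Ω) : SubCtx Θ Ω := by
  intro x σ hm
  obtain ⟨σ', hσ', hs'⟩ := h₂ x σ hm
  obtain ⟨σ'', hσ'', hs''⟩ := h₁ x σ' hσ'
  exact ⟨σ'', hσ'', hs''.trans hs'⟩

theorem mono_left {Θ Θ' Ω : Ctx} (hΘ : Θ ⊆ Θ') (h : SubCtx Θ Ω) : SubCtx Θ' Ω :=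
  fun x σ hm => let ⟨σ', hσ', hs⟩ := h x σ hm; ⟨σ', hΘ hσ', hs⟩

theorem cons {Θ Ω : Ctx} {x : VName} {σ' σ : VSTy} (hs : SubTy σ' σ) (h : SubCtx Θ Ω) :
    SubCtx ((x, σ') :: Θ) ((x, σ) :: Ω) := by
  intro y ρ hm
  rcases List.mem_cons.1 hm with heq | hm
  · obtain ⟨rfl, rfl⟩ := Prod.mk.inj heq
    exact ⟨σ', List.mem_cons_self, hs⟩
  · exact h.mono_left (List.subset_cons_self _ _) y ρ hm

end SubCtx

theorem VSplit.subTy {τ τ₁ τ₂ : VSTy} (h : VSplit τ τ₁ τ₂) : SubTy τ τ₁ ∧ SubTy τ τ₂ := by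
  induction h with
  | prod => exact ⟨.prodRight _ _ _ _ _, .prodLeft _ _ _ _ _⟩
  | both _ _ ih₁ ih₂ => exact ⟨.prodCong _ _ ih₁.1 ih₂.1, .prodCong _ _ ih₁.2 ih₂.2⟩
  | left _ _ _ ih =>
      exact ⟨.prodCong _ _ ih.1 (.refl _),
        (SubTy.prodRight _ _ _ _ _).trans (.prodCong _ _ ih.2 (.refl _))⟩
  | right _ _ _ ih =>
      exact ⟨.prodCong _ _ (.refl _) ih.1,
        (SubTy.prodLeft _ _ _ _ _).trans (.prodCong _ _ (.refl _) ih.2)⟩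
  | corec _ ih => exact ⟨(SubTy.corec1 _ _).trans ih.1, (SubTy.corec1 _ _).trans ih.2⟩
  | sub _ hs ih => exact ⟨ih.1.trans hs, ih.2⟩
  | comm _ ih => exact ih.symm

theorem CtxSplit.subCtx {Ω Ω₁ Ω₂ : Ctx} (h : CtxSplit Ω Ω₁ Ω₂) : SubCtx Ω Ω₁ ∧ SubCtx Ω Ω₂ := by
  induction h with
  | empty => exact ⟨.nil _, .nil _⟩
  | comm _ ih => exact ih.symm
  | bind _ τ _ ih =>
      exact ⟨.cons (.refl τ) ih.1, ih.2.mono_left (List.subset_cons_self _ _)⟩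
  | typeSplit _ _ hv ih => exact ⟨.cons hv.subTy.1 ih.1, .cons hv.subTy.2 ih.2⟩

theorem HasTy.unrestrict {Ω Ψ Θ : Ctx} {V : VS} {τ : VSTy} (h : HasTy Ω Ψ V τ)
    (hΩ : SubCtx Θ Ω) (hΨ : SubCtx Θ Ψ) : HasTy [] Θ V τ := by
  induction h generalizing Θ with
  | omegaVar hm =>
      obtain ⟨σ, hσ, hs⟩ := hΩ _ _ hm
      exact .sub (.psiVar hσ) hs
  | psiVar hm =>
      obtain ⟨σ, hσ, hs⟩ := hΨ _ _ hm
      exact .sub (.psiVar hσ) hs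
  | omegaGen hm =>
      obtain ⟨σ, hσ, hs⟩ := hΩ _ _ hm
      exact .sub (.psiGen hσ) hs
  | psiGen hm =>
      obtain ⟨σ, hσ, hs⟩ := hΨ _ _ hm
      exact .sub (.psiGen hσ) hs
  | pair hsplit _ _ ih₁ ih₂ =>
      exact .pair .empty (ih₁ (hΩ.trans hsplit.subCtx.1) hΨ) (ih₂ (hΩ.trans hsplit.subCtx.2) hΨ)
  | onlyLeftPair _ _ ih₁ ih₂ => exact .onlyLeftPair (ih₁ hΩ hΨ) (ih₂ (.nil _) (.refl _))
  | onlyRightPair _ _ ih₁ ih₂ => exact .onlyRightPair (ih₁ (.nil _) (.refl _)) (ih₂ hΩ hΨ)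
  | fst _ ih => exact .fst (ih hΩ hΨ)
  | snd _ ih => exact .snd (ih hΩ hΨ)
  | sub _ hs ih => exact .sub (ih hΩ hΨ) hs

/-- the affine restriction can be relaxed. -/
theorem weaken_affine_restriction {Ω : Ctx} {V : VS} {τ : VSTy}
    (h : HasTy Ω [] V τ) : HasTy [] Ω V τ :=
  h.unrestrict (.refl Ω) (.nil Ω)
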